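/- In the root system of type C_n (n ≥ 2), the set of quantum roots (positive roots β with ℓ(s_β) = ⟨2ρ, β^∨⟩ − 1) equals the union of the long positive roots together with the short roots of the form α_i + α_{i+1} + ⋯ + α_j for 1 ≤ i ≤ j ≤ n−1. -/

import Mathlib

/- A combinatorial framework for reduced crystallographic root systems with a
chosen system of simple roots, realized inside a real inner product space.
Weyl group elements are represented as plain functions `V → V` that are
compositions of simple reflections; `len` is the Coxeter length. -/

noncomputable section
open Classical
open scoped RealInnerProductSpace

namespace Pp

variable {V : Type*} [NormedAddCommGroup V] [InnerProductSpace ℝ V]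

/-- The coroot pairing `⟨x, α^∨⟩ = 2⟨x,α⟩/⟨α,α⟩`. -/
def cpr (x α : V) : ℝ := 2 * ⟪x, α⟫ / ⟪α, α⟫

/-- The reflection `s_α`, as a plain function. -/
def sref (α : V) : V → V := fun x => x - cpr x α • α

/-- `w` is a product of `n` reflections in simple roots taken from `Δ`. -/
def IsWord (Δ : Finset V) (w : V → V) (n : ℕ) : Prop :=
  ∃ l : List V, l.length = n ∧ (∀ α ∈ l, α ∈ Δ) ∧ w = (l.map sref).foldr (· ∘ ·) id

/-- The Weyl group generated by the simple reflections, as a set of functions. -/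
def Weyl (Δ : Finset V) : Set (V → V) := { w | ∃ n, IsWord Δ w n }

/-- Coxeter length with respect to the simple system `Δ`. -/
def len (Δ : Finset V) (w : V → V) : ℕ := sInf { n | IsWord Δ w n }

/-- The positive roots: roots which are nonnegative combinations of the
simple roots in `Δ`.  For a sub-system `Δ' ⊆ Δ`, `Pos Φ Δ'` is the set of
positive roots supported on `Δ'`. -/
def Pos (Φ Δ : Finset V) : Finset V :=
  Φ.filter fun β => ∃ c : V → ℝ, (∀ α ∈ Δ, 0 ≤ c α) ∧ β = ∑ α ∈ Δ, c α • α

/-- Half sum of positive roots. -/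
def rho (Φ Δ : Finset V) : V := (2:ℝ)⁻¹ • ∑ β ∈ Pos Φ Δ, β

/-- The axioms of a reduced crystallographic root system `Φ` with simple
system `Δ`. -/
structure IsRS (Φ Δ : Finset V) : Prop where
  zero_not_mem : (0:V) ∉ Φ
  neg_mem : ∀ α ∈ Φ, -α ∈ Φ
  reduced : ∀ α ∈ Φ, ∀ t : ℝ, t • α ∈ (Φ : Set V) → t = 1 ∨ t = -1
  cryst : ∀ α ∈ Φ, ∀ β ∈ Φ, ∃ k : ℤ, (k : ℝ) = cpr α β
  refl_mem : ∀ α ∈ Φ, ∀ β ∈ Φ, sref α β ∈ Φ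
  simple_mem : ∀ α ∈ Δ, α ∈ Φ
  simple_indep : LinearIndependent ℝ (fun α : Δ => (α : V))
  pos_or_neg : ∀ β ∈ Φ, β ∈ Pos Φ Δ ∨ -β ∈ Pos Φ Δ

/-- `β` is a quantum root: `ℓ(s_β) = ⟨2ρ, β^∨⟩ - 1`. -/
def IsQuantum (Φ Δ : Finset V) (β : V) : Prop :=
  (len Δ (sref β) : ℝ) = cpr ((2:ℝ) • rho Φ Δ) β - 1

/-- Minimal length coset representatives `W^P`: elements of `W` mapping the
positive roots of the parabolic (`Pos Φ ΔP`) to positive roots. -/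
def MinRep (Φ Δ ΔP : Finset V) (w : V → V) : Prop :=
  w ∈ Weyl Δ ∧ ∀ β ∈ Pos Φ ΔP, w β ∈ Pos Φ Δ

/-- `θ` is the highest root. -/
def IsHighest (Φ Δ : Finset V) (θ : V) : Prop :=
  θ ∈ Pos Φ Δ ∧ ∀ β ∈ Φ, ∃ c : V → ℝ, (∀ α ∈ Δ, 0 ≤ c α) ∧ θ - β = ∑ α ∈ Δ, c α • α

/-- All roots have the same length. -/
def SimplyLaced (Φ : Finset V) : Prop := ∀ α ∈ Φ, ∀ β ∈ Φ, ⟪α, α⟫ = ⟪β, β⟫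

/-- The node `ι ∈ Δ` is minuscule: the coefficient of `α_ι^∨` in every coroot
is at most `1`. -/
def Minuscule (Φ Δ : Finset V) (ι : V) : Prop :=
  ∀ β ∈ Φ, ∀ c : V → ℝ,
    (2 / ⟪β, β⟫) • β = ∑ α ∈ Δ, c α • ((2 / ⟪α, α⟫) • α) → c ι ≤ 1

/-- The node `ι ∈ Δ` is cominuscule: the coefficient of `α_ι` in every
positive root is at most `1`. -/
def Cominuscule (Φ Δ : Finset V) (ι : V) : Prop :=
  ∀ β ∈ Pos Φ Δ, ∀ c : V → ℝ,
    ((∀ α ∈ Δ, 0 ≤ c α) ∧ β = ∑ α ∈ Δ, c α • α) → c ι ≤ 1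

/-- `(Φ, Δ)` is the root system of type `B_n` in the standard coordinates
given by the orthonormal family `e`. -/
def TypeBData (Φ Δ : Finset V) (n : ℕ) (e : Fin n → V) : Prop :=
  Orthonormal ℝ e ∧
  (Φ : Set V) =
    ({v | ∃ i j : Fin n, i ≠ j ∧ (v = e i - e j ∨ v = e i + e j ∨ v = -(e i + e j))} ∪
     {v | ∃ i : Fin n, v = e i ∨ v = -(e i)}) ∧
  (Δ : Set V) =
    ({v | ∃ i : Fin n, ∃ h : (i : ℕ) + 1 < n, v = e i - e ⟨(i : ℕ) + 1, h⟩} ∪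
     {v | ∃ h : 0 < n, v = e ⟨n - 1, by omega⟩})

/-- `(Φ, Δ)` is the root system of type `C_n` in the standard coordinates
given by the orthonormal family `e`. -/
def TypeCData (Φ Δ : Finset V) (n : ℕ) (e : Fin n → V) : Prop :=
  Orthonormal ℝ e ∧
  (Φ : Set V) =
    ({v | ∃ i j : Fin n, i ≠ j ∧ (v = e i - e j ∨ v = e i + e j ∨ v = -(e i + e j))} ∪
     {v | ∃ i : Fin n, v = (2:ℝ) • e i ∨ v = -((2:ℝ) • e i)}) ∧
  (Δ : Set V) =
    ({v | ∃ i : Fin n, ∃ h : (i : ℕ) + 1 < n, v = e i - e ⟨(i : ℕ) + 1, h⟩} ∪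
     {v | ∃ h : 0 < n, v = (2:ℝ) • e ⟨n - 1, by omega⟩})

/-- `γ` is the distinguished (quantum) root attached to the minuscule node
`ι`: `γ = α_ι` in the simply-laced case, `γ = α_{n-1} + 2α_n = e_{n-1} + e_n`
in type `B_n` (with `ι = n`), and `γ = θ = 2e_1` in type `C_n` (with `ι = 1`). -/
def DistinguishedGamma (Φ Δ : Finset V) (ι γ : V) : Prop :=
  (SimplyLaced Φ ∧ γ = ι) ∨
  (∃ n : ℕ, ∃ _h : 2 ≤ n, ∃ e : Fin n → V, TypeBData Φ Δ n e ∧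
    ι = e ⟨n - 1, by omega⟩ ∧ γ = e ⟨n - 2, by omega⟩ + e ⟨n - 1, by omega⟩) ∨
  (∃ n : ℕ, ∃ _h : 2 ≤ n, ∃ e : Fin n → V, TypeCData Φ Δ n e ∧
    ι = e ⟨0, by omega⟩ - e ⟨1, by omega⟩ ∧ γ = (2:ℝ) • e ⟨0, by omega⟩)

/-!
Indices run from `0`, so the simple roots are `e_k - e_{k+1}` (`k + 1 < n`) and `2e_{n-1}`.
The positive roots are `e_i - e_j` (`i < j`) and `e_i + e_j` (`i ≤ j`): they are the roots on
which every partial sum `⟨·, e_0 + ⋯ + e_k⟩` is nonnegative. Each simple reflection `s_α`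
permutes the positive roots other than `α`, which gives `⟨2ρ, α^∨⟩ = 2` for simple `α`, hence
`⟨2ρ, e_k⟩ = 2(n - k)`, and shows that a word of length `m` has at most `m` inversions.
For `β = e_i - e_j` and `β = 2e_i`, conjugating a simple reflection step by step gives a word for
`s_β` of length `⟨2ρ, β^∨⟩ - 1`, and as many inversions of `s_β` can be listed, so `β` is
quantum. For `β = e_i + e_j` with `i < j`, the chain through `e_i - e_{n-1}` and `2e_{n-1}`
gives a word of length `⟨2ρ, β^∨⟩ - 3`.
-/

section Reflections

lemma cpr_add_left (x y α : V) : cpr (x + y) α = cpr x α + cpr y α := by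
  simp only [cpr, inner_add_left, mul_add, add_div]

lemma cpr_sub_left (x y α : V) : cpr (x - y) α = cpr x α - cpr y α := by
  simp only [cpr, inner_sub_left, mul_sub, sub_div]

lemma cpr_smul_left (c : ℝ) (x α : V) : cpr (c • x) α = c * cpr x α := by
  simp only [cpr, real_inner_smul_left]
  ring

lemma cpr_sum_left {ι : Type*} (s : Finset ι) (f : ι → V) (α : V) :
    cpr (∑ i ∈ s, f i) α = ∑ i ∈ s, cpr (f i) α := by
  simp only [cpr, sum_inner, Finset.mul_sum, Finset.sum_div]

lemma cpr_self {α : V} (hα : α ≠ 0) : cpr α α = 2 := by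
  rw [cpr, mul_div_assoc, div_self (inner_self_ne_zero.mpr hα), mul_one]

lemma sref_add (α x y : V) : sref α (x + y) = sref α x + sref α y := by
  simp only [sref, cpr_add_left, add_smul]
  abel

lemma sref_sub (α x y : V) : sref α (x - y) = sref α x - sref α y := by
  simp only [sref, cpr_sub_left, sub_smul]
  abel

lemma sref_smul (α : V) (c : ℝ) (x : V) : sref α (c • x) = c • sref α x := by
  simp only [sref, cpr_smul_left, smul_sub, smul_smul]

lemma sref_self {α : V} (hα : α ≠ 0) : sref α α = -α := by
  rw [sref, cpr_self hα]
  module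

lemma sref_sref (α x : V) : sref α (sref α x) = x := by
  rcases eq_or_ne α 0 with rfl | hα
  · simp [sref, cpr]
  · simp only [sref, cpr_sub_left, cpr_smul_left, cpr_self hα]
    module

lemma sref_inner (α x y : V) : ⟪sref α x, sref α y⟫ = ⟪x, y⟫ := by
  rcases eq_or_ne α 0 with rfl | hα
  · simp [sref, cpr]
  · have hαα : ⟪α, α⟫ ≠ 0 := inner_self_ne_zero.mpr hα
    simp only [sref, cpr, inner_sub_left, inner_sub_right, real_inner_smul_left,
      real_inner_smul_right, real_inner_comm α y]
    field_simp
    ring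

lemma sref_sref_eq (α γ : V) : sref (sref α γ) = sref α ∘ sref γ ∘ sref α := by
  funext x
  have hcpr : cpr (sref α x) γ = cpr x (sref α γ) := by
    rw [cpr, cpr, ← sref_inner α (sref α x) γ, sref_sref, ← sref_inner α γ γ]
  have hγ : sref γ (sref α x) = sref α x - cpr (sref α x) γ • γ := rfl
  rw [Function.comp_apply, Function.comp_apply, hγ, sref_sub, sref_smul, sref_sref, hcpr]
  rfl

end Reflections

section Words

variable {Δ : Finset V}

lemma IsWord.comp {w w' : V → V} {m m' : ℕ} (h : IsWord Δ w m) (h' : IsWord Δ w' m') :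
    IsWord Δ (w ∘ w') (m + m') := by
  obtain ⟨l, rfl, hl, rfl⟩ := h
  obtain ⟨l', rfl, hl', rfl⟩ := h'
  refine ⟨l ++ l', List.length_append, fun α hα => ?_, ?_⟩
  · rcases List.mem_append.mp hα with hα | hα
    exacts [hl α hα, hl' α hα]
  · rw [List.map_append, List.foldr_append]
    induction l with
    | nil => rfl
    | cons f l ih => simp [ih fun α hα => hl α (List.mem_cons_of_mem f hα), Function.comp_assoc]

lemma isWord_sref {α : V} (hα : α ∈ Δ) : IsWord Δ (sref α) 1 :=
  ⟨[α], rfl, by simpa using hα, by simp⟩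

lemma IsWord.sref_conj {α γ : V} {m : ℕ} (h : IsWord Δ (sref γ) m) (hα : α ∈ Δ) :
    IsWord Δ (sref (sref α γ)) (m + 2) := by
  rw [sref_sref_eq, show m + 2 = 1 + (m + 1) by omega]
  exact (isWord_sref hα).comp (h.comp (isWord_sref hα))

lemma IsWord.injective {w : V → V} {m : ℕ} (h : IsWord Δ w m) : Function.Injective w := by
  obtain ⟨l, -, -, rfl⟩ := h
  induction l with
  | nil => exact Function.injective_id
  | cons α l ih => exact (Function.LeftInverse.injective (sref_sref α)).comp ih

lemma len_le {w : V → V} {m : ℕ} (h : IsWord Δ w m) : len Δ w ≤ m :=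
  Nat.sInf_le h

lemma len_eq {w : V → V} {m : ℕ} (h : IsWord Δ w m) (hmin : ∀ k, IsWord Δ w k → m ≤ k) :
    len Δ w = m :=
  le_antisymm (len_le h) (le_csInf ⟨m, h⟩ hmin)

end Words

section Inversions

open Finset

-- `w β ∉ P` rather than `-w β ∈ P`: the two agree on roots, and this form lets the count below
-- go through without knowing that `w` preserves the roots.
def inversions (P : Finset V) (w : V → V) : Finset V := P.filter fun β => w β ∉ P

/-- Composing with `s_α` creates at most one new inversion, the preimage of `α`. -/
lemma card_inversions_le {P Δ : Finset V} (hP : ∀ α ∈ Δ, ∀ β ∈ P, β ≠ α → sref α β ∈ P)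
    {w : V → V} {m : ℕ} (hw : IsWord Δ w m) : (inversions P w).card ≤ m := by
  obtain ⟨l, rfl, hl, rfl⟩ := hw
  induction l with
  | nil => simp [inversions]
  | cons α l ih =>
    set w' := (l.map sref).foldr (· ∘ ·) id
    have hα : α ∈ Δ := hl α List.mem_cons_self
    have hl' : ∀ γ ∈ l, γ ∈ Δ := fun γ hγ => hl γ (List.mem_cons_of_mem α hγ)
    have hsub : inversions P (sref α ∘ w') ⊆ inversions P w' ∪ P.filter (w' · = α) := by
      intro β hβ
      simp only [inversions, mem_filter, mem_union, Function.comp_apply] at hβ ⊢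
      by_cases hβα : w' β = α
      · exact Or.inr ⟨hβ.1, hβα⟩
      · exact Or.inl ⟨hβ.1, fun hw'β => hβ.2 (hP α hα _ hw'β hβα)⟩
    have hpre : (P.filter (w' · = α)).card ≤ 1 :=
      card_le_one.2 fun a ha b hb =>
        (IsWord.injective ⟨l, rfl, hl', rfl⟩) ((mem_filter.1 ha).2.trans (mem_filter.1 hb).2.symm)
    calc (inversions P (sref α ∘ w')).card
        ≤ (inversions P w').card + (P.filter (w' · = α)).card :=
          (card_le_card hsub).trans (card_union_le _ _)
      _ ≤ l.length + 1 := add_le_add (ih hl') hpre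

lemma cpr_sum_eq_two {P : Finset V} {α : V} (hα : α ∈ P) (hneg : -α ∉ P)
    (hP : ∀ β ∈ P, β ≠ α → sref α β ∈ P) : cpr (∑ β ∈ P, β) α = 2 := by
  have hα0 : α ≠ 0 := by
    rintro rfl
    exact hneg (by rwa [neg_zero])
  have hmaps : ∀ β ∈ P.erase α, sref α β ∈ P.erase α := by
    intro β hβ
    obtain ⟨hβα, hβ⟩ := mem_erase.1 hβ
    refine mem_erase.2 ⟨fun h => hneg ?_, hP β hβ hβα⟩
    rwa [← sref_self hα0, ← congrArg (sref α) h, sref_sref]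
  have hfix : ∑ β ∈ P.erase α, sref α β = ∑ β ∈ P.erase α, β :=
    sum_nbij' (sref α) (sref α) hmaps hmaps (fun β _ => sref_sref α β)
      (fun β _ => sref_sref α β) fun β _ => rfl
  have hrest : cpr (∑ β ∈ P.erase α, β) α = 0 := by
    simp only [sref, sum_sub_distrib, ← sum_smul, ← cpr_sum_left, sub_eq_self,
      smul_eq_zero, hα0, or_false] at hfix
    exact hfix
  rw [← add_sum_erase P _ hα, cpr_add_left, cpr_self hα0, hrest, add_zero]

lemma card_add_card_le {ι α : Type*} {s t : Finset ι} {U : Finset α} {f g : ι → α}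
    (hf : Set.InjOn f s) (hg : Set.InjOn g t) (hfU : ∀ k ∈ s, f k ∈ U) (hgU : ∀ k ∈ t, g k ∈ U)
    (hfg : ∀ k ∈ s, ∀ k' ∈ t, f k ≠ g k') : s.card + t.card ≤ U.card := by
  rw [← card_image_of_injOn hf, ← card_image_of_injOn hg, ← card_union_of_disjoint]
  · exact card_le_card (union_subset (image_subset_iff.2 hfU) (image_subset_iff.2 hgU))
  · simp only [disjoint_left, mem_image]
    rintro _ ⟨k, hk, rfl⟩ ⟨k', hk', h⟩
    exact hfg k hk k' hk' h.symm

end Inversions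

section Coordinates

open Finset

variable {n : ℕ} {e : Fin n → V}

lemma exists_sub_succ_iff {M : Type*} [Sub M] {e : Fin n → M} (β : M) :
    (∃ i j : Fin n, (i : ℕ) ≤ (j : ℕ) ∧ ∃ h : (j : ℕ) + 1 < n, β = e i - e ⟨(j : ℕ) + 1, h⟩) ↔
      ∃ i j : Fin n, i < j ∧ β = e i - e j := by
  constructor
  · rintro ⟨i, j, hij, h, rfl⟩
    exact ⟨i, ⟨j + 1, h⟩, Fin.lt_def.2 (by simp; omega), rfl⟩
  · rintro ⟨i, j, hij, rfl⟩
    have hij : (i : ℕ) < j := hij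
    exact ⟨i, ⟨j - 1, by omega⟩, by simp; omega, by simp; omega,
      by congr; ext; simp; omega⟩

lemma swap_lt_swap_of_succ_eq {k l i j : Fin n} (hkl : (k : ℕ) + 1 = l) (hij : i < j)
    (hne : ¬(i = k ∧ j = l)) : Equiv.swap k l i < Equiv.swap k l j := by
  rw [Fin.lt_def] at hij ⊢
  simp only [Equiv.swap_apply_def]
  split_ifs <;> simp_all [Fin.ext_iff] <;> omega

variable (he : Orthonormal ℝ e)
include he

lemma inner_e (a b : Fin n) : ⟪e a, e b⟫ = if a = b then 1 else 0 :=
  orthonormal_iff_ite.mp he a b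

lemma inner_e_sum_Iic (a k : Fin n) : ⟪e a, ∑ t ∈ Iic k, e t⟫ = if a ≤ k then 1 else 0 := by
  simp [inner_sum, inner_e he]

lemma inner_sub_self_e {i j : Fin n} (hij : i ≠ j) : ⟪e i - e j, e i - e j⟫ = 2 := by
  simp only [inner_sub_left, inner_sub_right, inner_e he, if_neg hij, if_neg hij.symm]
  norm_num

lemma inner_add_self_e {i j : Fin n} (hij : i ≠ j) : ⟪e i + e j, e i + e j⟫ = 2 := by
  simp only [inner_add_left, inner_add_right, inner_e he, if_neg hij, if_neg hij.symm]
  norm_num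

lemma inner_add_self_e_self (i : Fin n) : ⟪e i + e i, e i + e i⟫ = 4 := by
  simp only [inner_add_left, inner_add_right, inner_e he]
  norm_num

lemma sref_sub_e {k l : Fin n} (hkl : k ≠ l) (a : Fin n) :
    sref (e k - e l) (e a) = e (Equiv.swap k l a) := by
  rw [sref, cpr, inner_sub_self_e he hkl, inner_sub_right, inner_e he, inner_e he,
    Equiv.swap_apply_def]
  by_cases hak : a = k <;> by_cases hal : a = l <;> simp_all

lemma sref_add_self_e (k a : Fin n) :
    sref (e k + e k) (e a) = if a = k then -e a else e a := by
  rw [sref, cpr, inner_add_self_e_self he, inner_add_right, inner_e he]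
  by_cases hak : a = k <;> simp only [hak, if_pos, if_false] <;> module

lemma add_ne_sub (i j a b : Fin n) : e i + e j ≠ e a - e b := by
  intro h
  have := congrArg (⟪·, ∑ t, e t⟫) h
  simp only [inner_add_left, inner_sub_left, inner_sum, inner_e he, Finset.sum_add_distrib,
    Finset.sum_sub_distrib, Finset.sum_ite_eq, mem_univ, if_true] at this
  norm_num at this

end Coordinates

section Cone

open scoped NNReal
open Finset

lemma mem_Pos_iff {Φ Δ : Finset V} {β : V} :
    β ∈ Pos Φ Δ ↔ β ∈ Φ ∧ β ∈ Submodule.span ℝ≥0 (Δ : Set V) := by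
  rw [Pos, mem_filter, Submodule.mem_span_finset]
  refine and_congr_right fun _ => ⟨?_, ?_⟩
  · rintro ⟨c, hc, rfl⟩
    refine ⟨fun α => if α ∈ Δ then (c α).toNNReal else 0, fun α hα => ?_, ?_⟩
    · by_contra h
      exact hα (if_neg h)
    · refine sum_congr rfl fun α hα => ?_
      simp only [if_pos hα, NNReal.smul_def, Real.coe_toNNReal _ (hc α hα)]
  · rintro ⟨f, -, rfl⟩
    exact ⟨fun α => f α, fun α _ => (f α).2, by simp only [NNReal.smul_def]⟩

lemma inner_nonneg_of_mem_span {s : Set V} {u x : V} (hs : ∀ α ∈ s, 0 ≤ ⟪α, u⟫)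
    (hx : x ∈ Submodule.span ℝ≥0 s) : 0 ≤ ⟪x, u⟫ := by
  induction hx using Submodule.span_induction with
  | mem α hα => exact hs α hα
  | zero => rw [inner_zero_left]
  | add x y _ _ hx hy => rw [inner_add_left]; exact add_nonneg hx hy
  | smul c x _ hx => rw [NNReal.smul_def, real_inner_smul_left]; exact mul_nonneg c.2 hx

end Cone

namespace TypeCData

open scoped NNReal
open Finset

variable {n : ℕ} {e : Fin n → V} {Φ Δ : Finset V} (hC : TypeCData Φ Δ n e)
include hC

lemma sub_mem_simple {i j : Fin n} (hij : (i : ℕ) + 1 = j) : e i - e j ∈ Δ := by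
  rw [← mem_coe, hC.2.2]
  have h : (i : ℕ) + 1 < n := hij ▸ j.isLt
  rw [show j = ⟨i + 1, h⟩ from Fin.ext hij.symm]
  exact Or.inl ⟨i, h, rfl⟩

lemma add_self_mem_simple {l : Fin n} (hl : (l : ℕ) + 1 = n) : e l + e l ∈ Δ := by
  rw [← mem_coe, hC.2.2, ← two_smul ℝ (e l)]
  rw [show l = ⟨n - 1, by omega⟩ from Fin.ext (by simp; omega)]
  exact Or.inr ⟨by omega, rfl⟩

lemma eq_of_mem_simple {α : V} (hα : α ∈ Δ) :
    (∃ i j : Fin n, (i : ℕ) + 1 = j ∧ α = e i - e j) ∨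
      ∃ l : Fin n, (l : ℕ) + 1 = n ∧ α = e l + e l := by
  rw [← mem_coe, hC.2.2] at hα
  rcases hα with ⟨i, h, rfl⟩ | ⟨h, rfl⟩
  · exact Or.inl ⟨i, _, rfl, rfl⟩
  · exact Or.inr ⟨_, by simp; omega, two_smul ℝ _⟩

lemma sub_mem_span {i j : Fin n} (hij : i ≤ j) :
    e i - e j ∈ Submodule.span ℝ≥0 (Δ : Set V) := by
  obtain ⟨d, hd⟩ := Nat.exists_eq_add_of_le (Fin.le_def.1 hij)
  induction d generalizing j with
  | zero => rw [Fin.ext (hd.trans (add_zero _)), sub_self]; exact zero_mem _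
  | succ d ih =>
    set k : Fin n := ⟨i + d, by omega⟩
    rw [← sub_add_sub_cancel (e i) (e k) (e j)]
    exact add_mem (ih (Fin.le_def.2 (by simp [k])) rfl)
      (Submodule.subset_span (hC.sub_mem_simple (by simp [k]; omega)))

lemma add_mem_span (i j : Fin n) : e i + e j ∈ Submodule.span ℝ≥0 (Δ : Set V) := by
  have hi := i.isLt
  set l : Fin n := ⟨n - 1, by omega⟩
  have hle : ∀ k : Fin n, k ≤ l := fun k => Fin.le_def.2 (by simp [l]; omega)
  rw [show e i + e j = (e i - e l) + (e j - e l) + (e l + e l) by abel]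
  exact add_mem (add_mem (hC.sub_mem_span (hle i)) (hC.sub_mem_span (hle j)))
    (Submodule.subset_span (hC.add_self_mem_simple (by simp [l]; omega)))

lemma inner_sum_Iic_nonneg {β : V} (hβ : β ∈ Pos Φ Δ) (k : Fin n) :
    0 ≤ ⟪β, ∑ t ∈ Iic k, e t⟫ := by
  refine inner_nonneg_of_mem_span (fun α hα => ?_) (mem_Pos_iff.1 hβ).2
  rcases hC.eq_of_mem_simple hα with ⟨i, j, hij, rfl⟩ | ⟨l, -, rfl⟩
  · rw [inner_sub_left, inner_e_sum_Iic hC.1, inner_e_sum_Iic hC.1]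
    have : j ≤ k → i ≤ k := (Fin.le_def.2 (by omega)).trans
    split_ifs <;> simp_all
  · rw [inner_add_left, inner_e_sum_Iic hC.1]
    split_ifs <;> norm_num

lemma sub_mem_Pos {i j : Fin n} (hij : i < j) : e i - e j ∈ Pos Φ Δ := by
  refine mem_Pos_iff.2 ⟨?_, hC.sub_mem_span hij.le⟩
  rw [← mem_coe, hC.2.1]
  exact Or.inl ⟨i, j, hij.ne, Or.inl rfl⟩

lemma add_mem_Pos (i j : Fin n) : e i + e j ∈ Pos Φ Δ := by
  refine mem_Pos_iff.2 ⟨?_, hC.add_mem_span i j⟩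
  rw [← mem_coe, hC.2.1]
  rcases eq_or_ne i j with rfl | hij
  · exact Or.inr ⟨i, Or.inl (two_smul ℝ _).symm⟩
  · exact Or.inl ⟨i, j, hij, Or.inr (Or.inl rfl)⟩

lemma sub_notMem_Pos {i j : Fin n} (hji : j < i) : e i - e j ∉ Pos Φ Δ := by
  intro h
  have := hC.inner_sum_Iic_nonneg h j
  rw [inner_sub_left, inner_e_sum_Iic hC.1, inner_e_sum_Iic hC.1, if_neg (not_le.2 hji),
    if_pos le_rfl] at this
  norm_num at this

lemma neg_add_notMem_Pos (i j : Fin n) : -(e i + e j) ∉ Pos Φ Δ := by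
  intro h
  have := hC.inner_sum_Iic_nonneg h (max i j)
  rw [inner_neg_left, inner_add_left, inner_e_sum_Iic hC.1, inner_e_sum_Iic hC.1,
    if_pos (le_max_left i j), if_pos (le_max_right i j)] at this
  norm_num at this

lemma eq_of_mem_Pos {β : V} (hβ : β ∈ Pos Φ Δ) :
    (∃ i j : Fin n, i < j ∧ β = e i - e j) ∨ ∃ i j : Fin n, i ≤ j ∧ β = e i + e j := by
  have hβΦ := (mem_Pos_iff.1 hβ).1
  rw [← mem_coe, hC.2.1] at hβΦ
  rcases hβΦ with ⟨i, j, hij, rfl | rfl | rfl⟩ | ⟨i, rfl | rfl⟩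
  · rcases hij.lt_or_gt with hij | hji
    · exact Or.inl ⟨i, j, hij, rfl⟩
    · exact absurd hβ (hC.sub_notMem_Pos hji)
  · rcases le_total i j with hij | hji
    · exact Or.inr ⟨i, j, hij, rfl⟩
    · exact Or.inr ⟨j, i, hji, add_comm _ _⟩
  · exact absurd hβ (hC.neg_add_notMem_Pos i j)
  · exact Or.inr ⟨i, i, le_rfl, two_smul ℝ _⟩
  · rw [two_smul] at hβ
    exact absurd hβ (hC.neg_add_notMem_Pos i i)

lemma sref_mem_Pos {α β : V} (hα : α ∈ Δ) (hβ : β ∈ Pos Φ Δ) (hne : β ≠ α) :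
    sref α β ∈ Pos Φ Δ := by
  have he := hC.1
  rcases hC.eq_of_mem_simple hα with ⟨k, l, hkl, rfl⟩ | ⟨l, hl, rfl⟩
  · have hkl' : k ≠ l := fun h => by subst h; omega
    rcases hC.eq_of_mem_Pos hβ with ⟨i, j, hij, rfl⟩ | ⟨i, j, -, rfl⟩
    · rw [sref_sub, sref_sub_e he hkl', sref_sub_e he hkl']
      exact hC.sub_mem_Pos (swap_lt_swap_of_succ_eq hkl hij
        fun ⟨hik, hjl⟩ => hne (by rw [hik, hjl]))
    · rw [sref_add, sref_sub_e he hkl', sref_sub_e he hkl']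
      exact hC.add_mem_Pos _ _
  · have hmax : ∀ a : Fin n, a ≤ l := fun a => Fin.le_def.2 (by have := a.isLt; omega)
    rcases hC.eq_of_mem_Pos hβ with ⟨i, j, hij, rfl⟩ | ⟨i, j, hij, rfl⟩
    · rw [sref_sub, sref_add_self_e he, sref_add_self_e he, if_neg (hij.trans_le (hmax j)).ne]
      split_ifs
      · rw [sub_neg_eq_add]
        exact hC.add_mem_Pos i j
      · exact hC.sub_mem_Pos hij
    · rw [sref_add, sref_add_self_e he, sref_add_self_e he]
      split_ifs with hi hj hj
      · exact absurd (by rw [hi, hj]) hne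
      · exact absurd (le_antisymm (hmax j) (hi ▸ hij)) hj
      · rw [← sub_eq_add_neg]
        exact hC.sub_mem_Pos (lt_of_le_of_ne hij (hj ▸ hi))
      · exact hC.add_mem_Pos i j

lemma mem_Pos_of_mem_simple {α : V} (hα : α ∈ Δ) : α ∈ Pos Φ Δ := by
  rcases hC.eq_of_mem_simple hα with ⟨i, j, hij, rfl⟩ | ⟨l, -, rfl⟩
  · exact hC.sub_mem_Pos (Fin.lt_def.2 (by omega))
  · exact hC.add_mem_Pos l l

lemma neg_notMem_Pos_of_mem_simple {α : V} (hα : α ∈ Δ) : -α ∉ Pos Φ Δ := by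
  rcases hC.eq_of_mem_simple hα with ⟨i, j, hij, rfl⟩ | ⟨l, -, rfl⟩
  · rw [neg_sub]
    exact hC.sub_notMem_Pos (Fin.lt_def.2 (by omega))
  · exact hC.neg_add_notMem_Pos l l

lemma cpr_two_rho_of_mem_simple {α : V} (hα : α ∈ Δ) : cpr ((2:ℝ) • rho Φ Δ) α = 2 := by
  rw [rho, smul_inv_smul₀ two_ne_zero]
  exact cpr_sum_eq_two (hC.mem_Pos_of_mem_simple hα) (hC.neg_notMem_Pos_of_mem_simple hα)
    fun _ => hC.sref_mem_Pos hα

/-- Read off from `⟨2ρ, α^∨⟩ = 2` along the simple roots `e_k - e_{k+1}` and `2e_{n-1}`. -/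
lemma inner_two_rho (k : Fin n) : ⟪(2:ℝ) • rho Φ Δ, e k⟫ = 2 * (n - k) := by
  have hstep : ∀ i j : Fin n, (i : ℕ) + 1 = j →
      ⟪(2:ℝ) • rho Φ Δ, e i⟫ = ⟪(2:ℝ) • rho Φ Δ, e j⟫ + 2 := by
    intro i j hij
    have := hC.cpr_two_rho_of_mem_simple (hC.sub_mem_simple hij)
    rw [cpr, inner_sub_self_e hC.1 (Fin.ne_of_lt (Fin.lt_def.2 (by omega))), inner_sub_right]
      at this
    linarith
  have hlast : ∀ l : Fin n, (l : ℕ) + 1 = n → ⟪(2:ℝ) • rho Φ Δ, e l⟫ = 2 := by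
    intro l hl
    have := hC.cpr_two_rho_of_mem_simple (hC.add_self_mem_simple hl)
    rw [cpr, inner_add_self_e_self hC.1, inner_add_right] at this
    linarith
  obtain ⟨d, hd⟩ : ∃ d, (k : ℕ) + d + 1 = n := ⟨n - 1 - k, by omega⟩
  induction d generalizing k with
  | zero =>
    have hn : (n : ℝ) = k + 1 := by exact_mod_cast hd.symm
    rw [hlast k (by omega), hn]
    ring
  | succ d ih =>
    rw [hstep k ⟨k + 1, by omega⟩ rfl, ih _ (by simp; omega)]
    push_cast
    ring

lemma isWord_sref_sub :
    ∀ (d : ℕ) {i j : Fin n}, (i : ℕ) + d + 1 = j → IsWord Δ (sref (e i - e j)) (2 * d + 1)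
  | 0, _, _, hij => isWord_sref (hC.sub_mem_simple hij)
  | d + 1, i, j, hij => by
    set k : Fin n := ⟨i + d + 1, by omega⟩
    have hkj : k ≠ j := Fin.ne_of_lt (Fin.lt_def.2 (show (i : ℕ) + d + 1 < j by omega))
    have hik : i ≠ k := Fin.ne_of_lt (Fin.lt_def.2 (show (i : ℕ) < i + d + 1 by omega))
    have hij' : i ≠ j := Fin.ne_of_lt (Fin.lt_def.2 (by omega))
    have hconj : sref (e k - e j) (e i - e k) = e i - e j := by
      rw [sref_sub, sref_sub_e hC.1 hkj, sref_sub_e hC.1 hkj,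
        Equiv.swap_apply_of_ne_of_ne hik hij', Equiv.swap_apply_left]
    have := (isWord_sref_sub d (j := k) rfl).sref_conj
      (hC.sub_mem_simple (i := k) (by show (i : ℕ) + d + 1 + 1 = j; omega))
    rwa [hconj] at this

lemma isWord_sref_add_self :
    ∀ (d : ℕ) {i : Fin n}, (i : ℕ) + d + 1 = n → IsWord Δ (sref (e i + e i)) (2 * d + 1)
  | 0, _, hi => isWord_sref (hC.add_self_mem_simple hi)
  | d + 1, i, hi => by
    set k : Fin n := ⟨i + 1, by omega⟩
    have hik : i ≠ k := Fin.ne_of_lt (Fin.lt_def.2 (show (i : ℕ) < i + 1 by omega))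
    have hconj : sref (e i - e k) (e k + e k) = e i + e i := by
      rw [sref_add, sref_sub_e hC.1 hik, Equiv.swap_apply_right]
    have := (isWord_sref_add_self d (i := k) (by simp [k]; omega)).sref_conj
      (hC.sub_mem_simple (j := k) rfl)
    rwa [hconj] at this

/-- From `e_i - e_{n-1}`, reflect in `2e_{n-1}`, then walk `e_i + e_{n-1}` down to `e_i + e_j`. -/
lemma isWord_sref_add_of_sub {i l : Fin n} {m : ℕ} (hl : (l : ℕ) + 1 = n)
    (hw : IsWord Δ (sref (e i - e l)) m) :
    ∀ (d : ℕ) {j : Fin n}, i < j → (j : ℕ) + d + 1 = n →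
      IsWord Δ (sref (e i + e j)) (m + 2 * d + 2)
  | 0, j, hij, hj => by
    obtain rfl : j = l := Fin.ext (by omega)
    have hconj : sref (e j + e j) (e i - e j) = e i + e j := by
      rw [sref_sub, sref_add_self_e hC.1, sref_add_self_e hC.1, if_neg hij.ne, if_pos rfl,
        sub_neg_eq_add]
    have := hw.sref_conj (hC.add_self_mem_simple hl)
    rwa [hconj] at this
  | d + 1, j, hij, hj => by
    set k : Fin n := ⟨j + 1, by omega⟩
    have hjk : j < k := Fin.lt_def.2 (by simp [k])
    have hconj : sref (e j - e k) (e i + e k) = e i + e j := by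
      rw [sref_add, sref_sub_e hC.1 hjk.ne, sref_sub_e hC.1 hjk.ne,
        Equiv.swap_apply_of_ne_of_ne hij.ne (hij.trans hjk).ne, Equiv.swap_apply_right]
    have := (isWord_sref_add_of_sub hl hw d (hij.trans hjk) (by simp [k]; omega)).sref_conj
      (hC.sub_mem_simple (j := k) rfl)
    rwa [hconj] at this

lemma le_card_inversions_sref_sub {i j : Fin n} {d : ℕ} (hd : (i : ℕ) + d + 1 = j) :
    2 * d + 1 ≤ (inversions (Pos Φ Δ) (sref (e i - e j))).card := by
  have he := hC.1
  have hij : i < j := Fin.lt_def.2 (by omega)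
  rw [show 2 * d + 1 = (Ioc i j).card + (Ioo i j).card by
    rw [Fin.card_Ioc, Fin.card_Ioo]; omega]
  refine card_add_card_le (f := fun k => e i - e k) (g := fun k => e k - e j)
    ((sub_right_injective.comp he.linearIndependent.injective).injOn)
    ((sub_left_injective.comp he.linearIndependent.injective).injOn) ?_ ?_ ?_
  · intro k hk
    obtain ⟨hik, hkj⟩ := mem_Ioc.1 hk
    refine mem_filter.2 ⟨hC.sub_mem_Pos hik, ?_⟩
    rw [sref_sub, sref_sub_e he hij.ne, sref_sub_e he hij.ne, Equiv.swap_apply_left]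
    rcases hkj.lt_or_eq with hkj | rfl
    · rw [Equiv.swap_apply_of_ne_of_ne hik.ne' hkj.ne]
      exact hC.sub_notMem_Pos hkj
    · rw [Equiv.swap_apply_right]
      exact hC.sub_notMem_Pos hik
  · intro k hk
    obtain ⟨hik, hkj⟩ := mem_Ioo.1 hk
    refine mem_filter.2 ⟨hC.sub_mem_Pos hkj, ?_⟩
    rw [sref_sub, sref_sub_e he hij.ne, sref_sub_e he hij.ne,
      Equiv.swap_apply_of_ne_of_ne hik.ne' hkj.ne, Equiv.swap_apply_right]
    exact hC.sub_notMem_Pos hik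
  · intro k hk k' hk' h
    have := congrArg (⟪·, e i⟫) h
    simp only [inner_sub_left, inner_e he, if_neg (mem_Ioc.1 hk).1.ne',
      if_neg (mem_Ioo.1 hk').1.ne', if_neg hij.ne'] at this
    norm_num at this

lemma le_card_inversions_sref_add_self {i : Fin n} {d : ℕ} (hd : (i : ℕ) + d + 1 = n) :
    2 * d + 1 ≤ (inversions (Pos Φ Δ) (sref (e i + e i))).card := by
  have he := hC.1
  rw [show 2 * d + 1 = (Ici i).card + (Ioi i).card by
    rw [Fin.card_Ici, Fin.card_Ioi]; omega]
  refine card_add_card_le (f := fun k => e i + e k) (g := fun k => e i - e k)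
    (((add_right_injective (e i)).comp he.linearIndependent.injective).injOn)
    ((sub_right_injective.comp he.linearIndependent.injective).injOn) ?_ ?_ ?_
  · intro k hk
    refine mem_filter.2 ⟨hC.add_mem_Pos i k, ?_⟩
    rw [sref_add, sref_add_self_e he, sref_add_self_e he, if_pos rfl]
    rcases (mem_Ici.1 hk).lt_or_eq with hik | rfl
    · rw [if_neg hik.ne', neg_add_eq_sub]
      exact hC.sub_notMem_Pos hik
    · rw [if_pos rfl, ← neg_add]
      exact hC.neg_add_notMem_Pos _ _
  · intro k hk
    have hik := mem_Ioi.1 hk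
    refine mem_filter.2 ⟨hC.sub_mem_Pos hik, ?_⟩
    rw [sref_sub, sref_add_self_e he, sref_add_self_e he, if_pos rfl, if_neg hik.ne', ← neg_add']
    exact hC.neg_add_notMem_Pos _ _
  · intro k _ k' hk' h
    have := congrArg (⟪·, e k'⟫) h
    simp only [inner_add_left, inner_sub_left, inner_e he, if_neg (mem_Ioi.1 hk').ne] at this
    split_ifs at this <;> norm_num at this

lemma len_sref_sub {i j : Fin n} {d : ℕ} (hd : (i : ℕ) + d + 1 = j) :
    len Δ (sref (e i - e j)) = 2 * d + 1 :=
  len_eq (hC.isWord_sref_sub d hd) fun _ hw =>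
    (hC.le_card_inversions_sref_sub hd).trans
      (card_inversions_le (fun _ hα _ => hC.sref_mem_Pos hα) hw)

lemma len_sref_add_self {i : Fin n} {d : ℕ} (hd : (i : ℕ) + d + 1 = n) :
    len Δ (sref (e i + e i)) = 2 * d + 1 :=
  len_eq (hC.isWord_sref_add_self d hd) fun _ hw =>
    (hC.le_card_inversions_sref_add_self hd).trans
      (card_inversions_le (fun _ hα _ => hC.sref_mem_Pos hα) hw)

lemma len_sref_add_le {i j : Fin n} {d d' : ℕ} (hd : (i : ℕ) + d + 1 = j)
    (hd' : (j : ℕ) + d' + 1 = n) : len Δ (sref (e i + e j)) ≤ 2 * d + 4 * d' + 3 := by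
  set l : Fin n := ⟨n - 1, by omega⟩
  have hw := hC.isWord_sref_sub (d + d') (i := i) (j := l) (by simp [l]; omega)
  have := len_le (hC.isWord_sref_add_of_sub (by simp [l]; omega) hw d'
    (Fin.lt_def.2 (by omega)) hd')
  omega

lemma isQuantum_sub {i j : Fin n} (hij : i < j) : IsQuantum Φ Δ (e i - e j) := by
  obtain ⟨d, hd⟩ := Nat.exists_eq_add_of_lt hij
  have hj : ((j : ℕ) : ℝ) = i + d + 1 := by exact_mod_cast hd
  rw [IsQuantum, hC.len_sref_sub hd.symm, cpr, inner_sub_right, hC.inner_two_rho,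
    hC.inner_two_rho, inner_sub_self_e hC.1 hij.ne, hj]
  push_cast
  ring

lemma isQuantum_add_self (i : Fin n) : IsQuantum Φ Δ (e i + e i) := by
  obtain ⟨d, hd⟩ : ∃ d, (i : ℕ) + d + 1 = n := ⟨n - 1 - i, by omega⟩
  have hn : (n : ℝ) = i + d + 1 := by exact_mod_cast hd.symm
  rw [IsQuantum, hC.len_sref_add_self hd, cpr, inner_add_right, hC.inner_two_rho,
    inner_add_self_e_self hC.1, hn]
  push_cast
  ring

/-- `ℓ(s_β) ≤ 4n - 2i - 2j - 3` falls short of `⟨2ρ, β^∨⟩ - 1 = 4n - 2i - 2j - 1`. -/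
lemma not_isQuantum_add {i j : Fin n} (hij : i < j) : ¬ IsQuantum Φ Δ (e i + e j) := by
  obtain ⟨d, hd⟩ := Nat.exists_eq_add_of_lt hij
  obtain ⟨d', hd'⟩ : ∃ d', (j : ℕ) + d' + 1 = n := ⟨n - 1 - j, by omega⟩
  have hle : (len Δ (sref (e i + e j)) : ℝ) ≤ 2 * d + 4 * d' + 3 := by
    exact_mod_cast hC.len_sref_add_le hd.symm hd'
  have hj : ((j : ℕ) : ℝ) = i + d + 1 := by exact_mod_cast hd
  have hn : (n : ℝ) = j + d' + 1 := by exact_mod_cast hd'.symm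
  rw [IsQuantum, cpr, inner_add_right, hC.inner_two_rho, hC.inner_two_rho,
    inner_add_self_e hC.1 hij.ne]
  intro h
  rw [h, hn, hj] at hle
  linarith

end TypeCData

end Pp

open Pp in
theorem stmt2_general {V : Type*} [NormedAddCommGroup V] [InnerProductSpace ℝ V]
    (n : ℕ) (e : Fin n → V) (Φ Δ : Finset V)
    (hC : TypeCData Φ Δ n e)
    (β : V) (hβ : β ∈ Pos Φ Δ) :
    IsQuantum Φ Δ β ↔
      (⟪β, β⟫ = (4:ℝ) ∨
        ∃ i j : Fin n, (i : ℕ) ≤ (j : ℕ) ∧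
          ∃ h : (j : ℕ) + 1 < n, β = e i - e ⟨(j : ℕ) + 1, h⟩) := by
  rw [exists_sub_succ_iff]
  rcases hC.eq_of_mem_Pos hβ with ⟨i, j, hij, rfl⟩ | ⟨i, j, hij, rfl⟩
  · exact iff_of_true (hC.isQuantum_sub hij) (Or.inr ⟨i, j, hij, rfl⟩)
  rcases hij.lt_or_eq with hij | rfl
  · refine iff_of_false (hC.not_isQuantum_add hij) ?_
    rintro (h | ⟨a, b, -, h⟩)
    · rw [inner_add_self_e hC.1 hij.ne] at h
      norm_num at h
    · exact add_ne_sub hC.1 i j a b h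
  · exact iff_of_true (hC.isQuantum_add_self i) (Or.inl (inner_add_self_e_self hC.1 i))

open Pp in
/-- In type `C_n` (n ≥ 2) the quantum roots are exactly the long positive
roots (`⟪β,β⟫ = 4`, i.e. the roots `2e_i`) together with the short roots
`α_i + ⋯ + α_j = e_i - e_{j+1}` for `1 ≤ i ≤ j ≤ n-1`. -/
theorem stmt2 {V : Type*} [NormedAddCommGroup V] [InnerProductSpace ℝ V]
    (n : ℕ) (hn : 2 ≤ n) (e : Fin n → V) (Φ Δ : Finset V)
    (hRS : IsRS Φ Δ) (hC : TypeCData Φ Δ n e)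
    (β : V) (hβ : β ∈ Pos Φ Δ) :
    IsQuantum Φ Δ β ↔
      (⟪β, β⟫ = (4:ℝ) ∨
        ∃ i j : Fin n, (i : ℕ) ≤ (j : ℕ) ∧
          ∃ h : (j : ℕ) + 1 < n, β = e i - e ⟨(j : ℕ) + 1, h⟩) :=
  stmt2_general n e Φ Δ hC β hβ
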